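/- Let G be a finite chordal graph with no isolated vertices and let S be an S(G)-set. Then γt(G) = 2γ(G) if and only if S is both a packing and a dominating set of G. -/

import Mathlib

open SimpleGraph

namespace TotalDom

variable {V : Type*}

/-- The closed neighborhood `N[v]` of a vertex. -/
def cnbr (G : SimpleGraph V) (v : V) : Set V := insert v (G.neighborSet v)

/-- `S` is a dominating set: every vertex outside `S` has a neighbor in `S`. -/
def IsDomSet (G : SimpleGraph V) (S : Set V) : Prop := ∀ v ∉ S, ∃ u ∈ S, G.Adj u v

/-- `S` is a total dominating set: every vertex has a neighbor in `S`. -/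
def IsTotalDomSet (G : SimpleGraph V) (S : Set V) : Prop := ∀ v : V, ∃ u ∈ S, G.Adj u v

/-- The domination number `γ(G)`. -/
noncomputable def domNum (G : SimpleGraph V) : ℕ :=
  sInf {n | ∃ S : Set V, IsDomSet G S ∧ S.ncard = n}

/-- The total domination number `γₜ(G)`. -/
noncomputable def totalDomNum (G : SimpleGraph V) : ℕ :=
  sInf {n | ∃ S : Set V, IsTotalDomSet G S ∧ S.ncard = n}

/-- A minimum dominating set (γ-set). -/
def IsMinDomSet (G : SimpleGraph V) (S : Set V) : Prop := IsDomSet G S ∧ S.ncard = domNum G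

/-- `S` is a packing: closed neighborhoods of distinct members are disjoint. -/
def IsPacking (G : SimpleGraph V) (S : Set V) : Prop :=
  S.Pairwise fun u v => Disjoint (cnbr G u) (cnbr G v)

/-- `M(v)`: neighbors of `v` having a neighbor outside `N[v]`. -/
def Mset (G : SimpleGraph V) (v : V) : Set V :=
  {u | G.Adj v u ∧ ∃ w, G.Adj u w ∧ w ∉ cnbr G v}

/-- `D(v)`: neighbors `u` of `v` that are not true twins of `v` with `N[u] ⊆ N[v]`. -/
def Dset (G : SimpleGraph V) (v : V) : Set V :=
  {u | G.Adj v u ∧ cnbr G u ≠ cnbr G v ∧ cnbr G u ⊆ cnbr G v}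

/-- `T(v)`: `v` together with its true twins. -/
def Tset (G : SimpleGraph V) (v : V) : Set V := {u | cnbr G u = cnbr G v}

/-- A non-isolated vertex `v` is special if no `u ∈ M(v)` satisfies `D(v) ⊆ N(u)`. -/
def Special (G : SimpleGraph V) (v : V) : Prop :=
  (G.neighborSet v).Nonempty ∧ ¬ ∃ u ∈ Mset G v, Dset G v ⊆ G.neighborSet u

/-- An `S(G)`-set: a set of special vertices containing exactly one vertex from each
true-twin equivalence class of special vertices. -/
def IsSGSet (G : SimpleGraph V) (S : Set V) : Prop :=
  (∀ u ∈ S, Special G u) ∧ ∀ v, Special G v → ∃! u, u ∈ S ∧ u ∈ Tset G v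

/-- `G` has no isolated vertices. -/
def NoIsolated (G : SimpleGraph V) : Prop := ∀ v : V, ∃ u, G.Adj v u

/-- `G` contains no induced copy of `H`. -/
def Free {α : Type*} (H : SimpleGraph α) (G : SimpleGraph V) : Prop := IsEmpty (H ↪g G)

/-- `H₁`: a 6-cycle plus one chord between vertices at distance two along the cycle. -/
def H1 : SimpleGraph (Fin 6) := cycleGraph 6 ⊔ fromEdgeSet {s(0, 2)}

/-- `H₂`: a 6-cycle `x₁x₂x₃x₄x₅x₆` plus the chords `x₂x₆` and `x₃x₅`. -/
def H2 : SimpleGraph (Fin 6) := cycleGraph 6 ⊔ fromEdgeSet {s(1, 5), s(2, 4)}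

/-- A leaf: a vertex of degree one. -/
def IsLeaf (G : SimpleGraph V) (v : V) : Prop := ∃! u, G.Adj v u

/-- A support vertex: a vertex adjacent to a leaf. -/
def IsSupport (G : SimpleGraph V) (v : V) : Prop := ∃ u, G.Adj v u ∧ IsLeaf G u

/-- `sup(G)`: the set of support vertices. -/
def supSet (G : SimpleGraph V) : Set V := {v | IsSupport G v}

/-! If `S` is a packing that dominates `G`, then `γ(G) = |S|`, since a packing is never larger
than a dominating set. A total dominating set meets each `N[s]`, `s ∈ S`, in at least two
vertices: a single vertex `u` there would lie in `M(s)` with `D(s) ⊆ N(u)`, which is what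
specialness forbids. The closed neighbourhoods being disjoint, `γₜ(G) ≥ 2|S| = 2γ(G) ≥ γₜ(G)`.

Conversely, let `γₜ(G) = 2γ(G)` (pairing each vertex of a `γ`-set with a neighbour shows
`γₜ ≤ 2γ` in general) and let `D` be a `γ`-set. Then trading one vertex of `D` for at most `|D|`
others never yields a total dominating set. Ruling out such trades shows that `D` is a packing,
that every special vertex is a true twin of a vertex of `D`, and, using chordality (no induced
`C₄`, `C₅`, `C₆`), that every vertex of `D` is special. So `D` and `S` pick vertices from the
same true-twin classes, and `S` inherits packing and domination from `D`. -/

variable {G : SimpleGraph V}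

lemma mem_cnbr {u v : V} : u ∈ cnbr G v ↔ u = v ∨ G.Adj v u := Set.mem_insert_iff

lemma self_mem_cnbr (v : V) : v ∈ cnbr G v := Set.mem_insert v _

lemma mem_cnbr_of_adj {u v : V} (h : G.Adj v u) : u ∈ cnbr G v := Set.mem_insert_of_mem v h

lemma mem_cnbr_comm {u v : V} : u ∈ cnbr G v ↔ v ∈ cnbr G u := by
  simp only [mem_cnbr, eq_comm, G.adj_comm]

lemma adj_of_mem_cnbr {u v : V} (h : u ∈ cnbr G v) (hne : u ≠ v) : G.Adj v u :=
  (mem_cnbr.mp h).resolve_left hne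

lemma IsDomSet.exists_mem_cnbr {D : Set V} (hD : IsDomSet G D) (v : V) :
    ∃ x ∈ D, v ∈ cnbr G x := by
  by_cases hv : v ∈ D
  · exact ⟨v, hv, self_mem_cnbr v⟩
  · obtain ⟨x, hx, hxv⟩ := hD v hv
    exact ⟨x, hx, mem_cnbr_of_adj hxv⟩

lemma domNum_le_ncard {D : Set V} (hD : IsDomSet G D) : domNum G ≤ D.ncard :=
  Nat.sInf_le ⟨D, hD, rfl⟩

lemma totalDomNum_le_ncard {T : Set V} (hT : IsTotalDomSet G T) : totalDomNum G ≤ T.ncard :=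
  Nat.sInf_le ⟨T, hT, rfl⟩

lemma exists_isMinDomSet (G : SimpleGraph V) : ∃ D, IsMinDomSet G D :=
  Nat.sInf_mem (s := {n | ∃ S : Set V, IsDomSet G S ∧ S.ncard = n})
    ⟨_, Set.univ, fun v hv => (hv (Set.mem_univ v)).elim, rfl⟩

lemma exists_isTotalDomSet_ncard_eq (hiso : NoIsolated G) :
    ∃ T, IsTotalDomSet G T ∧ T.ncard = totalDomNum G :=
  Nat.sInf_mem (s := {n | ∃ S : Set V, IsTotalDomSet G S ∧ S.ncard = n})
    ⟨_, Set.univ, fun v => (hiso v).imp fun _ hu => ⟨trivial, hu.symm⟩, rfl⟩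

lemma totalDomNum_le_two_mul_domNum [Finite V] (hiso : NoIsolated G) :
    totalDomNum G ≤ 2 * domNum G := by
  obtain ⟨D, hD, hDc⟩ := exists_isMinDomSet G
  choose nbr hnbr using hiso
  have hT : IsTotalDomSet G (D ∪ nbr '' D) := by
    intro v
    by_cases hv : v ∈ D
    · exact ⟨nbr v, Or.inr ⟨v, hv, rfl⟩, (hnbr v).symm⟩
    · obtain ⟨u, hu, huv⟩ := hD v hv
      exact ⟨u, Or.inl hu, huv⟩
  calc totalDomNum G ≤ (D ∪ nbr '' D).ncard := totalDomNum_le_ncard hT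
    _ ≤ D.ncard + (nbr '' D).ncard := Set.ncard_union_le _ _
    _ ≤ D.ncard + D.ncard := by grw [Set.ncard_image_le]
    _ = 2 * domNum G := by rw [hDc, two_mul]

lemma IsPacking.ncard_le_of_isDomSet [Finite V] {P D : Set V} (hP : IsPacking G P)
    (hD : IsDomSet G D) : P.ncard ≤ D.ncard := by
  choose! f hfD hf using fun p (_ : p ∈ P) => hD.exists_mem_cnbr p
  refine Set.ncard_le_ncard_of_injOn f hfD fun a ha b hb hab => ?_
  by_contra hne
  exact Set.disjoint_left.mp (hP ha hb hne) (mem_cnbr_comm.mp (hf a ha))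
    (hab ▸ mem_cnbr_comm.mp (hf b hb))

lemma IsPacking.two_mul_ncard_le [Finite V] {P T : Set V} (hP : IsPacking G P)
    (hT : ∀ v ∈ P, 2 ≤ (T ∩ cnbr G v).ncard) : 2 * P.ncard ≤ T.ncard := by
  have hdisj : P.PairwiseDisjoint fun v => T ∩ cnbr G v := fun u hu v hv huv =>
    (hP hu hv huv).mono Set.inter_subset_right Set.inter_subset_right
  calc 2 * P.ncard = ∑ _ ∈ P.toFinite.toFinset, 2 := by
        rw [Finset.sum_const, smul_eq_mul, mul_comm, Set.ncard_eq_toFinset_card P]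
    _ ≤ ∑ v ∈ P.toFinite.toFinset, (T ∩ cnbr G v).ncard :=
        Finset.sum_le_sum fun v hv => hT v (P.toFinite.mem_toFinset.mp hv)
    _ = (⋃ v ∈ P, T ∩ cnbr G v).ncard := by
        rw [P.toFinite.ncard_biUnion (fun _ _ => Set.toFinite _) hdisj,
          finsum_mem_eq_finite_toFinset_sum _ P.toFinite]
    _ ≤ T.ncard := Set.ncard_le_ncard (Set.iUnion₂_subset fun _ _ => Set.inter_subset_left)

lemma Special.two_le_ncard_inter_cnbr [Finite V] {v : V} {T : Set V} (hv : Special G v)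
    (hT : IsTotalDomSet G T) : 2 ≤ (T ∩ cnbr G v).ncard := by
  obtain ⟨u, huT, huv⟩ := hT v
  by_contra! hlt
  have hunique : ∀ q ∈ T, q ∈ cnbr G v → q = u := fun q hq hqv =>
    (Set.ncard_le_one (s := T ∩ cnbr G v)).mp (by omega) q ⟨hq, hqv⟩ u
      ⟨huT, mem_cnbr_of_adj huv.symm⟩
  obtain ⟨t, htT, htu⟩ := hT u
  refine hv.2 ⟨u, ⟨huv.symm, t, htu.symm, fun htv => htu.ne (hunique t htT htv)⟩, ?_⟩
  rintro z ⟨-, -, hzv⟩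
  obtain ⟨q, hqT, hqz⟩ := hT z
  exact hunique q hqT (hzv (mem_cnbr_of_adj hqz.symm)) ▸ hqz

theorem totalDomNum_eq_two_mul_domNum_of_isPacking [Finite V] (hiso : NoIsolated G)
    {S : Set V} (hSp : ∀ v ∈ S, Special G v) (hP : IsPacking G S) (hD : IsDomSet G S) :
    totalDomNum G = 2 * domNum G := by
  obtain ⟨D, hDmin, hDc⟩ := exists_isMinDomSet G
  have hγ : domNum G = S.ncard :=
    le_antisymm (domNum_le_ncard hD) (hDc ▸ hP.ncard_le_of_isDomSet hDmin)
  obtain ⟨T, hT, hTc⟩ := exists_isTotalDomSet_ncard_eq hiso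
  have hlow : 2 * S.ncard ≤ totalDomNum G :=
    hTc ▸ hP.two_mul_ncard_le fun v hv => (hSp v hv).two_le_ncard_inter_cnbr hT
  have hup := totalDomNum_le_two_mul_domNum hiso
  omega

lemma not_adj_of_disjoint_cnbr {d x t : V} (hdisj : Disjoint (cnbr G d) (cnbr G x))
    (ht : t ∈ cnbr G x) : ¬ G.Adj d t :=
  fun h => Set.disjoint_left.mp hdisj (mem_cnbr_of_adj h) ht

lemma neighborSet_inter_subset_or_subset (hchordal : ∀ n : ℕ, 4 ≤ n → Free (cycleGraph n) G)
    {d x y z : V} (hdisj : Disjoint (cnbr G d) (cnbr G x)) (hy : G.Adj d y) (hz : G.Adj d z) :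
    G.neighborSet y ∩ G.neighborSet x ⊆ G.neighborSet z ∨
      G.neighborSet z ∩ G.neighborSet x ⊆ G.neighborSet y := by
  classical
  by_contra! h
  obtain ⟨c, ⟨hyc, hxc⟩, hzc⟩ := Set.not_subset.mp h.1
  obtain ⟨b, ⟨hzb, hxb⟩, hyb⟩ := Set.not_subset.mp h.2
  simp only [mem_neighborSet] at hyc hxc hzc hzb hxb hyb
  have hdx := not_adj_of_disjoint_cnbr hdisj (self_mem_cnbr x)
  have hdb := not_adj_of_disjoint_cnbr hdisj (mem_cnbr_of_adj hxb)
  have hdc := not_adj_of_disjoint_cnbr hdisj (mem_cnbr_of_adj hxc)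
  have hxy := not_adj_of_disjoint_cnbr hdisj.symm (mem_cnbr_of_adj hy)
  have hxz := not_adj_of_disjoint_cnbr hdisj.symm (mem_cnbr_of_adj hz)
  have induced_cycle : ∀ n (f : Fin n → V), 4 ≤ n → Function.Injective f →
      (∀ i j, G.Adj (f i) (f j) ↔ (cycleGraph n).Adj i j) → False :=
    fun n f hn hf hadj => (hchordal n hn).false ⟨⟨f, hf⟩, hadj _ _⟩
  -- `d y c x b z` is a 6-cycle whose only possible chords are `yz` and `bc`
  refine if hyz : G.Adj y z then if hbc : G.Adj b c then
      induced_cycle 4 ![y, c, b, z] le_rfl ?_ ?_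
    else induced_cycle 5 ![y, c, x, b, z] (by norm_num) ?_ ?_
  else if hbc : G.Adj b c then induced_cycle 5 ![d, y, c, b, z] (by norm_num) ?_ ?_
    else induced_cycle 6 ![d, y, c, x, b, z] (by norm_num) ?_ ?_
  all_goals first
    | intro i j hij
      fin_cases i <;> fin_cases j <;> simp only [Fin.zero_eta, Fin.mk_one, Fin.reduceFinMk,
        Matrix.cons_val, Fin.isValue] at hij ⊢ <;> first
        | rfl
        | (subst hij; grind [SimpleGraph.adj_comm, SimpleGraph.irrefl])
    | intro i j
      fin_cases i <;> fin_cases j <;> simp only [Fin.zero_eta, Fin.mk_one, Fin.reduceFinMk,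
        Matrix.cons_val, Fin.isValue] <;> first
        | exact iff_of_true ‹_› (by decide)
        | exact iff_of_true (Adj.symm ‹_›) (by decide)
        | exact iff_of_false G.irrefl (by decide)
        | exact iff_of_false ‹_› (by decide)
        | exact iff_of_false (mt Adj.symm ‹_›) (by decide)

lemma exists_adj_forall_adj_of_disjoint_cnbr [Finite V]
    (hchordal : ∀ n : ℕ, 4 ≤ n → Free (cycleGraph n) G) (hiso : NoIsolated G) {d x : V}
    (hdisj : Disjoint (cnbr G d) (cnbr G x)) :
    ∃ p, G.Adj x p ∧ ∀ y, G.Adj d y → ∀ w, G.Adj y w → G.Adj x w → G.Adj y p := by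
  set A := {y | G.Adj d y ∧ (G.neighborSet y ∩ G.neighborSet x).Nonempty}
  rcases A.eq_empty_or_nonempty with hA | hA
  · obtain ⟨p, hp⟩ := hiso x
    refine ⟨p, hp, fun y hy w hyw hxw => ?_⟩
    exact absurd (hA ▸ ⟨hy, w, hyw, hxw⟩ : y ∈ (∅ : Set V)) id
  -- the sets `N(y) ∩ N(x)`, `y ∈ A`, form a chain, so the smallest one lies in all of them
  obtain ⟨y₀, ⟨hy₀, p, hy₀p, hxp⟩, hmin⟩ :=
    A.exists_min_image (fun y => (G.neighborSet y ∩ G.neighborSet x).ncard) A.toFinite hA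
  refine ⟨p, hxp, fun y hy w hyw hxw => ?_⟩
  rcases neighborSet_inter_subset_or_subset hchordal hdisj hy₀ hy with h | h
  · exact h ⟨hy₀p, hxp⟩
  · have heq : G.neighborSet y ∩ G.neighborSet x = G.neighborSet y₀ ∩ G.neighborSet x :=
      Set.eq_of_subset_of_ncard_le (fun t ht => ⟨h ht, ht.2⟩) (hmin y ⟨hy, w, hyw, hxw⟩)
    exact (heq ▸ ⟨hy₀p, hxp⟩ : p ∈ G.neighborSet y ∩ G.neighborSet x).1

lemma IsPacking.cnbr_subset_of_special {D : Set V} (hpack : IsPacking G D) (hD : IsDomSet G D)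
    {s x : V} (hs : Special G s) (hx : x ∈ D) (hsx : s ∈ cnbr G x) : cnbr G x ⊆ cnbr G s := by
  intro w hwx
  by_contra hws
  have hxs : G.Adj x s := adj_of_mem_cnbr hsx (by rintro rfl; exact hws hwx)
  have hxw : G.Adj x w := adj_of_mem_cnbr hwx (by rintro rfl; exact hws (mem_cnbr_of_adj hxs.symm))
  -- `x ∈ M(s)`, so some `z ∈ D(s)` is not adjacent to `x`; the vertex of `D` dominating `z`
  -- lies in `N[z] ⊆ N[s]` and so collides with `x` at `s`
  obtain ⟨z, ⟨-, -, hzs⟩, hzx⟩ :=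
    Set.not_subset.mp fun h => hs.2 ⟨x, ⟨hxs.symm, w, hxw, hws⟩, h⟩
  obtain ⟨x', hx', hzx'⟩ := hD.exists_mem_cnbr z
  have hx'x : x' ≠ x := by
    rintro rfl
    have hzx : z = x' := (mem_cnbr.mp hzx').resolve_right hzx
    exact hws (hzs (hzx ▸ hwx))
  exact Set.disjoint_left.mp (hpack hx' hx hx'x)
    (mem_cnbr_comm.mp (hzs (mem_cnbr_comm.mp hzx'))) hsx

lemma exists_adj_not_mem_cnbr {d u v : V} (hu : u ∈ Mset G d)
    (hDu : Dset G d ⊆ G.neighborSet u) (hv : v ∈ cnbr G d) (huv : ¬ G.Adj u v) :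
    ∃ w, G.Adj v w ∧ w ∉ cnbr G d := by
  obtain ⟨hdu, w₀, huw₀, hw₀⟩ := hu
  by_cases hvu : v = u
  · subst hvu
    exact ⟨w₀, huw₀, hw₀⟩
  have hdv : G.Adj d v := adj_of_mem_cnbr hv (by rintro rfl; exact huv hdu.symm)
  have hnsub : ¬ cnbr G v ⊆ cnbr G d := by
    intro hsub
    by_cases heq : cnbr G v = cnbr G d
    · have huv' : u ∈ cnbr G v := heq ▸ mem_cnbr_of_adj hdu
      exact huv (adj_of_mem_cnbr huv' (Ne.symm hvu)).symm
    · exact huv (hDu ⟨hdv, heq, hsub⟩)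
  obtain ⟨w, hwv, hwd⟩ := Set.not_subset.mp hnsub
  exact ⟨w, adj_of_mem_cnbr hwv (by rintro rfl; exact hwd hv), hwd⟩

lemma ncard_insert_image_sdiff_singleton_le [Finite V] {D : Set V} {d : V} (hd : d ∈ D)
    (a : V) (f : V → V) : (insert a (f '' (D \ {d}))).ncard ≤ D.ncard :=
  calc _ ≤ (f '' (D \ {d})).ncard + 1 := Set.ncard_insert_le _ _
    _ ≤ (D \ {d}).ncard + 1 := by grw [Set.ncard_image_le]
    _ = D.ncard := Set.ncard_sdiff_singleton_add_one hd

lemma ncard_insert_insert_image_sdiff_le [Finite V] {D : Set V} {d d' : V} (hd : d ∈ D)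
    (hd' : d' ∈ D \ {d}) (a b : V) (f : V → V) :
    (insert a (insert b (f '' ((D \ {d}) \ {d'})))).ncard ≤ D.ncard :=
  calc _ ≤ (insert b (f '' ((D \ {d}) \ {d'}))).ncard + 1 := Set.ncard_insert_le _ _
    _ ≤ (D \ {d}).ncard + 1 := by grw [ncard_insert_image_sdiff_singleton_le hd']
    _ = D.ncard := Set.ncard_sdiff_singleton_add_one hd

section Exchange

variable [Finite V] {D : Set V}

/-- `D \ {d} ∪ E` is a total dominating set with at most `|D| - 1 + |E|` vertices. -/
lemma IsMinDomSet.ncard_lt_of_exchange (h2 : totalDomNum G = 2 * domNum G)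
    (hD : IsMinDomSet G D) {d : V} (hd : d ∈ D) {E : Set V}
    (hEd : ∀ v ∈ cnbr G d, ∃ y ∈ D \ {d} ∪ E, G.Adj y v)
    (hED : ∀ v ∈ D \ {d}, ∃ y ∈ D \ {d} ∪ E, G.Adj y v) : D.ncard < E.ncard := by
  have hT : IsTotalDomSet G (D \ {d} ∪ E) := by
    intro v
    obtain ⟨x, hx, hvx⟩ := hD.1.exists_mem_cnbr v
    by_cases hxd : x = d
    · subst hxd
      exact hEd v hvx
    by_cases hvx' : v = x
    · subst hvx'
      exact hED v ⟨hx, hxd⟩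
    · exact ⟨x, Or.inl ⟨hx, hxd⟩, adj_of_mem_cnbr hvx hvx'⟩
  have hle := totalDomNum_le_ncard hT
  have hunion := Set.ncard_union_le (D \ {d}) E
  have hdiff := Set.ncard_sdiff_singleton_add_one hd
  have hDc := hD.2
  omega

lemma IsMinDomSet.isPacking (hiso : NoIsolated G) (h2 : totalDomNum G = 2 * domNum G)
    (hD : IsMinDomSet G D) : IsPacking G D := by
  choose nbr hnbr using hiso
  intro u hu v hv huv
  by_contra hnd
  obtain ⟨w, hwu, hwv⟩ := Set.not_disjoint_iff.mp hnd
  have hvD : v ∈ D \ {u} := ⟨hv, Ne.symm huv⟩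
  refine (hD.ncard_lt_of_exchange h2 hu (E := insert u (insert w (nbr '' ((D \ {u}) \ {v}))))
    ?_ ?_).not_ge (ncard_insert_insert_image_sdiff_le hu hvD u w nbr)
  · intro t ht
    by_cases htu : t = u
    · subst htu
      by_cases hwt : w = t
      · exact ⟨v, Or.inl hvD, adj_of_mem_cnbr (hwt ▸ hwv) huv⟩
      · exact ⟨w, Or.inr (by simp), (adj_of_mem_cnbr hwu hwt).symm⟩
    · exact ⟨u, Or.inr (Set.mem_insert _ _), adj_of_mem_cnbr ht htu⟩
  · intro t ht
    by_cases htv : t = v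
    · subst htv
      by_cases hwt : w = t
      · exact ⟨u, Or.inr (Set.mem_insert _ _), adj_of_mem_cnbr (hwt ▸ hwu) (Ne.symm huv)⟩
      · exact ⟨w, Or.inr (by simp), (adj_of_mem_cnbr hwv hwt).symm⟩
    · exact ⟨nbr t, Or.inr (.inr (.inr ⟨t, ⟨ht, htv⟩, rfl⟩)), (hnbr t).symm⟩

lemma IsMinDomSet.exists_cnbr_eq_of_special (hiso : NoIsolated G)
    (h2 : totalDomNum G = 2 * domNum G) (hD : IsMinDomSet G D) (hpack : IsPacking G D)
    {s : V} (hs : Special G s) : ∃ x ∈ D, cnbr G s = cnbr G x := by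
  obtain ⟨x, hx, hsx⟩ := hD.1.exists_mem_cnbr s
  refine ⟨x, hx, ?_⟩
  have hsub := hpack.cnbr_subset_of_special hD.1 hs hx hsx
  by_contra hne
  obtain ⟨w, hws, hwx⟩ := Set.not_subset.mp fun h => hne (h.antisymm hsub)
  obtain ⟨xw, hxw, hwxw⟩ := hD.1.exists_mem_cnbr w
  have hxwD : xw ∈ D \ {x} := ⟨hxw, by rintro rfl; exact hwx hwxw⟩
  have hsw : G.Adj s w := adj_of_mem_cnbr hws (by rintro rfl; exact hwx hsx)
  choose nbr hnbr using hiso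
  refine (hD.ncard_lt_of_exchange h2 hx (E := insert s (insert w (nbr '' ((D \ {x}) \ {xw}))))
    ?_ ?_).not_ge (ncard_insert_insert_image_sdiff_le hx hxwD s w nbr)
  · intro v hv
    by_cases hvs : v = s
    · subst hvs
      exact ⟨w, Or.inr (by simp), hsw.symm⟩
    · exact ⟨s, Or.inr (Set.mem_insert _ _), adj_of_mem_cnbr (hsub hv) hvs⟩
  · intro t ht
    by_cases htxw : t = xw
    · subst htxw
      by_cases hwt : w = t
      · subst hwt
        exact ⟨s, Or.inr (Set.mem_insert _ _), hsw⟩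
      · exact ⟨w, Or.inr (by simp), adj_of_mem_cnbr (mem_cnbr_comm.mp hwxw) (Ne.symm hwt)⟩
    · exact ⟨nbr t, Or.inr (.inr (.inr ⟨t, ⟨ht, htxw⟩, rfl⟩)), (hnbr t).symm⟩

lemma IsMinDomSet.special_of_mem (hchordal : ∀ n : ℕ, 4 ≤ n → Free (cycleGraph n) G)
    (hiso : NoIsolated G) (h2 : totalDomNum G = 2 * domNum G) (hD : IsMinDomSet G D)
    (hpack : IsPacking G D) {d : V} (hd : d ∈ D) : Special G d := by
  refine ⟨hiso d, ?_⟩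
  rintro ⟨u, hu, hDu⟩
  choose! p hxp hp using fun x (hx : x ∈ D \ {d}) =>
    exists_adj_forall_adj_of_disjoint_cnbr hchordal hiso (hpack hd hx.1 (Ne.symm hx.2))
  refine (hD.ncard_lt_of_exchange h2 hd (E := insert u (p '' (D \ {d}))) ?_ ?_).not_ge
    (ncard_insert_image_sdiff_singleton_le hd u p)
  · intro v hv
    by_cases huv : G.Adj u v
    · exact ⟨u, Or.inr (Set.mem_insert _ _), huv⟩
    obtain ⟨w, hvw, hwd⟩ := exists_adj_not_mem_cnbr hu hDu hv huv
    obtain ⟨x, hx, hwx⟩ := hD.1.exists_mem_cnbr w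
    have hxD : x ∈ D \ {d} := ⟨hx, by rintro rfl; exact hwd hwx⟩
    by_cases hwx' : w = x
    · exact ⟨w, Or.inl (hwx' ▸ hxD), hvw.symm⟩
    · have hdv : G.Adj d v := adj_of_mem_cnbr hv (by rintro rfl; exact hwd (mem_cnbr_of_adj hvw))
      exact ⟨p x, Or.inr (Set.mem_insert_of_mem _ ⟨x, hxD, rfl⟩),
        (hp x hxD v hdv w hvw (adj_of_mem_cnbr hwx hwx')).symm⟩
  · intro x hx
    exact ⟨p x, Or.inr (Set.mem_insert_of_mem _ ⟨x, hx, rfl⟩), (hxp x hx).symm⟩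

end Exchange

lemma IsSGSet.isPacking {S D : Set V} (hS : IsSGSet G S) (hD : IsPacking G D)
    (hSD : ∀ s, Special G s → ∃ x ∈ D, cnbr G s = cnbr G x) : IsPacking G S := by
  intro s hs s' hs' hne
  obtain ⟨x, hx, hsx⟩ := hSD s (hS.1 s hs)
  obtain ⟨x', hx', hsx'⟩ := hSD s' (hS.1 s' hs')
  rw [hsx, hsx']
  refine hD hx hx' fun hxx' => hne ?_
  subst hxx'
  exact (hS.2 s (hS.1 s hs)).unique ⟨hs, rfl⟩ ⟨hs', hsx'.trans hsx.symm⟩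

lemma IsSGSet.isDomSet {S D : Set V} (hS : IsSGSet G S) (hD : IsDomSet G D)
    (hDS : ∀ x ∈ D, Special G x) : IsDomSet G S := by
  intro v hv
  obtain ⟨x, hx, hvx⟩ := hD.exists_mem_cnbr v
  obtain ⟨u, ⟨huS, hux⟩, -⟩ := hS.2 x (hDS x hx)
  have hvu : v ∈ cnbr G u := (show cnbr G u = cnbr G x from hux) ▸ hvx
  exact ⟨u, huS, adj_of_mem_cnbr hvu (by rintro rfl; exact hv huS)⟩

/-- For a chordal graph `G` (no induced cycles of length ≥ 4) with no isolated vertices and an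
`S(G)`-set `S`: `γₜ(G) = 2γ(G)` iff `S` is both a packing and a dominating set of `G`. -/
theorem stmt1 {V : Type*} [Fintype V] (G : SimpleGraph V) (hiso : NoIsolated G)
    (hchordal : ∀ n : ℕ, 4 ≤ n → Free (cycleGraph n) G)
    (S : Set V) (hS : IsSGSet G S) :
    totalDomNum G = 2 * domNum G ↔ IsPacking G S ∧ IsDomSet G S := by
  constructor
  · intro h2
    obtain ⟨D, hD⟩ := exists_isMinDomSet G
    have hpack := hD.isPacking hiso h2
    exact ⟨hS.isPacking hpack fun s hs => hD.exists_cnbr_eq_of_special hiso h2 hpack hs,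
      hS.isDomSet hD.1 fun x hx => hD.special_of_mem hchordal hiso h2 hpack hx⟩
  · rintro ⟨hP, hDom⟩
    exact totalDomNum_eq_two_mul_domNum_of_isPacking hiso hS.1 hP hDom

end TotalDom
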